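/- Let Φ_S, Φ_T ∈ ℝ^{n×k} satisfy generalized orthonormality Φ_S^T M_S Φ_S = I and Φ_T^T M_T Φ_T = I with M_S, M_T diagonal positive definite, and satisfy generalized eigenvalue equations W_S Φ_S = M_S Φ_S Δ_S and W_T Φ_T = M_T Φ_T Δ_T with Δ_S, Δ_T diagonal. Suppose a permutation Π satisfies Π^T M_T Π = M_S, Π^T W_T Π = W_S, and ΠΦ_S = Φ_T C for some C ∈ ℝ^{k×k}. Then C Δ_S = Δ_T C. -/
import Mathlib


open Matrix

def IsPermMatrix {n : ℕ} (P : Matrix (Fin n) (Fin n) ℝ) : Prop :=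
  ∃ σ : Equiv.Perm (Fin n), ∀ i j, P i j = if i = σ j then 1 else 0

theorem stmt17 (n k : ℕ)
    (ΦS ΦT : Matrix (Fin n) (Fin k) ℝ)
    (MS MT WS WT : Matrix (Fin n) (Fin n) ℝ)
    (hMSdiag : MS.IsDiag) (hMTdiag : MT.IsDiag)
    (hMSpos : ∀ i, 0 < MS i i) (hMTpos : ∀ i, 0 < MT i i)
    (ΔS ΔT : Matrix (Fin k) (Fin k) ℝ) (hΔS : ΔS.IsDiag) (hΔT : ΔT.IsDiag)
    (hSorth : ΦSᵀ * MS * ΦS = 1) (hTorth : ΦTᵀ * MT * ΦT = 1)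
    (hSeig : WS * ΦS = MS * ΦS * ΔS) (hTeig : WT * ΦT = MT * ΦT * ΔT)
    (P : Matrix (Fin n) (Fin n) ℝ) (hperm : IsPermMatrix P)
    (hmass : Pᵀ * MT * P = MS) (hstiff : Pᵀ * WT * P = WS)
    (C : Matrix (Fin k) (Fin k) ℝ) (halign : P * ΦS = ΦT * C) :
    C * ΔS = ΔT * C := by
  obtain ⟨σ, hσ⟩ := hperm
  have hPPt : P * Pᵀ = 1 := by
    ext i j
    simp only [mul_apply, transpose_apply, one_apply, hσ]
    rw [Finset.sum_eq_single (σ.symm i)]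
    · by_cases h : i = j
      · simp [h]
      · have h1 : ¬ j = σ (σ.symm i) := by simpa using fun h' => h h'.symm
        simp only [h1, if_false]
        have h2 : ¬ j = i := fun h' => h h'.symm
        simp [h, h2]
    · intro b _ hb
      have : ¬ i = σ b := fun h => hb ((Equiv.symm_apply_eq σ).mpr h).symm
      simp [this]
    · simp
  have hM : MT * P = P * MS := by
    have := congrArg (fun X => P * X) hmass
    simpa [← Matrix.mul_assoc, hPPt] using this
  have hW : WT * P = P * WS := by
    have := congrArg (fun X => P * X) hstiff
    simpa [← Matrix.mul_assoc, hPPt] using this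
  have key : MT * ΦT * ΔT * C = MT * ΦT * (C * ΔS) := by
    calc MT * ΦT * ΔT * C = (WT * ΦT) * C := by rw [hTeig]
      _ = WT * (ΦT * C) := by rw [Matrix.mul_assoc]
      _ = WT * (P * ΦS) := by rw [halign]
      _ = (WT * P) * ΦS := by rw [Matrix.mul_assoc]
      _ = (P * WS) * ΦS := by rw [hW]
      _ = P * (WS * ΦS) := by rw [Matrix.mul_assoc]
      _ = P * (MS * ΦS * ΔS) := by rw [hSeig]
      _ = MT * ΦT * (C * ΔS) := by
          simp only [← Matrix.mul_assoc]
          rw [← hM, Matrix.mul_assoc MT P ΦS, halign, ← Matrix.mul_assoc,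
            Matrix.mul_assoc (MT * ΦT) C ΔS]
  have h2 := congrArg (fun X => ΦTᵀ * X) key
  simp only [← Matrix.mul_assoc] at h2
  rw [hTorth, one_mul] at h2
  simpa using h2.symm
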